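/- First-order (ε¹) approximate Noether determining equations: Let g, h : ℝ^n → Sym(n,ℝ) be smooth fields of symmetric n×n matrices with g(x) invertible for every x, let V₀, V₁, ξ₀, ξ₁, f₁ : ℝ × ℝ^n → ℝ and η₀, η₁ : ℝ × ℝ^n → ℝ^n be smooth, assume ∂_{x^k} ξ₀ = 0 for all k, and set L₀(t,x,v) = ½ Σ g_{ij}(x) v^i v^j − V₀(t,x) and L₁(t,x,v) = ½ Σ h_{ij}(x) v^i v^j − V₁(t,x). Then the order-ε Noether condition X₁^{[1]} L₀ + X₀^{[1]} L₁ + L₀ · D_t ξ₁ + L₁ · D_t ξ₀ − D_t f₁ = 0, where X_A^{[1]} L := ξ_A ∂_t L + Σ_i η_A^i ∂_{x^i} L + Σ_i (D_t η_A^i − v^i D_t ξ_A) ∂_{v^i} L, holds for all (t,x,v) ∈ ℝ × ℝ^n × ℝ^n if and only if the following four conditions hold identically: (i) ∂_{x^k} ξ₁ = 0 for all k (so ξ₁ = ξ₁(t)); (ii) (L_{η₀} h)_{ij} + (L_{η₁} g)_{ij} = (∂_t ξ₀) h_{ij} + (∂_t ξ₁) g_{ij} for all i,j; (iii) Σ_i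 h_{ij} ∂_t η₀^i + Σ_i g_{ij} ∂_t η₁^i = ∂_{x^j} f₁ for all j; (iv) ξ₀ ∂_t V₁ + Σ_k η₀^k ∂_{x^k} V₁ + ξ₁ ∂_t V₀ + Σ_k η₁^k ∂_{x^k} V₀ + (∂_t ξ₀) V₁ + (∂_t ξ₁) V₀ + ∂_t f₁ = 0. -/

import Mathlib

open scoped BigOperators

/-- Partial derivative with respect to `t` of a function `F(t,x)`. -/
noncomputable def pdt {n : ℕ} (F : ℝ → (Fin n → ℝ) → ℝ) (t : ℝ) (x : Fin n → ℝ) : ℝ :=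
  deriv (fun s => F s x) t

/-- Partial derivative with respect to `xᵏ` of a function `F(t,x)`. -/
noncomputable def pdx {n : ℕ} (F : ℝ → (Fin n → ℝ) → ℝ) (k : Fin n)
    (t : ℝ) (x : Fin n → ℝ) : ℝ :=
  fderiv ℝ (F t) x (Pi.single k 1)

/-- The total-derivative operator: `D_t F = ∂ₜF + Σₖ vᵏ ∂_{xᵏ}F`. -/
noncomputable def Dtot {n : ℕ} (F : ℝ → (Fin n → ℝ) → ℝ)
    (t : ℝ) (x v : Fin n → ℝ) : ℝ :=
  pdt F t x + ∑ k, v k * pdx F k t x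

/-- The regular Lagrangian `½ Σ m_{ij}(x) vⁱvʲ − V(t,x)`. -/
noncomputable def lag {n : ℕ} (m : (Fin n → ℝ) → Fin n → Fin n → ℝ)
    (V : ℝ → (Fin n → ℝ) → ℝ) (t : ℝ) (x v : Fin n → ℝ) : ℝ :=
  (1/2) * (∑ i, ∑ j, m x i j * v i * v j) - V t x

/-- The action `X_A^{[1]} L` of the first prolongation of the point-symmetry
generator `X_A = ξ_A ∂ₜ + η_A^i ∂ᵢ` on a function `L(t,x,v)`:
`X_A^{[1]} L = ξ_A ∂ₜL + Σᵢ η_Aⁱ ∂_{xⁱ}L + Σᵢ (D_tη_Aⁱ − vⁱ D_tξ_A) ∂_{vⁱ}L`. -/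
noncomputable def prolongAct {n : ℕ} (ξ : ℝ → (Fin n → ℝ) → ℝ)
    (η : ℝ → (Fin n → ℝ) → Fin n → ℝ)
    (L : ℝ → (Fin n → ℝ) → (Fin n → ℝ) → ℝ) (t : ℝ) (x v : Fin n → ℝ) : ℝ :=
  ξ t x * deriv (fun s => L s x v) t
    + (∑ i, η t x i * fderiv ℝ (fun y => L t y v) x (Pi.single i 1))
    + (∑ i, (Dtot (fun s y => η s y i) t x v - v i * Dtot ξ t x v)
        * fderiv ℝ (fun w => L t x w) v (Pi.single i 1))

/-- Coordinate expression of the Lie derivative of a symmetric matrix field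
`m` along the (time-dependent) vector field `η(t,·)`:
`(L_η m)_{ij} = Σₖ ηᵏ ∂_{xᵏ}m_{ij} + Σₖ m_{kj} ∂_{xⁱ}ηᵏ + Σₖ m_{ik} ∂_{xʲ}ηᵏ`. -/
noncomputable def lieD {n : ℕ} (η : ℝ → (Fin n → ℝ) → Fin n → ℝ)
    (m : (Fin n → ℝ) → Fin n → Fin n → ℝ) (t : ℝ) (x : Fin n → ℝ) (i j : Fin n) : ℝ :=
  (∑ k, η t x k * fderiv ℝ (fun y => m y i j) x (Pi.single k 1))
    + (∑ k, m x k j * pdx (fun s y => η s y k) i t x)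
    + (∑ k, m x i k * pdx (fun s y => η s y k) j t x)

/-! ### auxiliary lemmas -/

theorem aux_quad_zero (n : ℕ) (M : Fin n → Fin n → ℝ) (hsym : ∀ i j, M i j = M j i)
    (hq : ∀ v : Fin n → ℝ, ∑ a, ∑ b, M a b * v a * v b = 0) : ∀ i j, M i j = 0 := by
  have hdiag : ∀ i, M i i = 0 := by
    intro i
    simpa [Pi.single_apply, Finset.sum_ite_eq', mul_ite, ite_mul] using hq (Pi.single i 1)
  intro i j
  rcases eq_or_ne i j with rfl | hij
  · exact hdiag i
  · have := hq (fun k => (Pi.single i 1 : Fin n → ℝ) k + (Pi.single j 1 : Fin n → ℝ) k)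
    simp only [Pi.single_apply, mul_add, add_mul, Finset.sum_add_distrib,
      mul_ite, ite_mul, mul_one, one_mul, mul_zero, zero_mul,
      Finset.sum_ite_eq', Finset.mem_univ, if_true] at this
    have h2 : M i j + M j i = 0 := by
      rcases eq_or_ne j i with h | hji
      · exact absurd h.symm hij
      · simp [hij, hji, hdiag] at this
        linarith [this]
    have := hsym i j
    linarith

theorem aux_cube_zero (n : ℕ) (G : Fin n → Fin n → ℝ) (hsym : ∀ i j, G i j = G j i)
    (hdet : (Matrix.of G).det ≠ 0) (b : Fin n → ℝ)
    (hq : ∀ v : Fin n → ℝ, (∑ i, ∑ j, G i j * v i * v j) * (∑ k, b k * v k) = 0) :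
    ∀ k, b k = 0 := by
  intro k
  by_contra hk
  have hQf : ∀ v : Fin n → ℝ, ∑ i, ∑ j, G i j * v i * v j = 0 := by
    intro v
    have hexp : ∀ s : ℝ,
        (∑ i, ∑ j, G i j * (v i + s * (Pi.single k 1 : Fin n → ℝ) i)
          * (v j + s * (Pi.single k 1 : Fin n → ℝ) j))
        = (∑ i, ∑ j, G i j * v i * v j)
          + s * (∑ i, ∑ j, G i j * (v i * (Pi.single k 1 : Fin n → ℝ) j
              + (Pi.single k 1 : Fin n → ℝ) i * v j))
          + s^2 * (∑ i, ∑ j, G i j * (Pi.single k 1 : Fin n → ℝ) i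
              * (Pi.single k 1 : Fin n → ℝ) j) := by
      intro s
      simp only [Finset.mul_sum]
      rw [← Finset.sum_add_distrib, ← Finset.sum_add_distrib]
      refine Finset.sum_congr rfl fun i _ => ?_
      rw [← Finset.sum_add_distrib, ← Finset.sum_add_distrib]
      exact Finset.sum_congr rfl fun j _ => by ring
    have hl : ∀ s : ℝ, (∑ j, b j * (v j + s * (Pi.single k 1 : Fin n → ℝ) j))
        = (∑ j, b j * v j) + s * b k := by
      intro s
      simp [mul_add, Finset.sum_add_distrib, Pi.single_apply, mul_ite, ite_mul,
        Finset.mul_sum, Finset.sum_ite_eq']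
      ring
    have key : ∀ s : ℝ, (∑ j, b j * v j) + s * b k ≠ 0 →
        (∑ i, ∑ j, G i j * v i * v j)
          + s * (∑ i, ∑ j, G i j * (v i * (Pi.single k 1 : Fin n → ℝ) j
              + (Pi.single k 1 : Fin n → ℝ) i * v j))
          + s^2 * (∑ i, ∑ j, G i j * (Pi.single k 1 : Fin n → ℝ) i
              * (Pi.single k 1 : Fin n → ℝ) j) = 0 := by
      intro s hs
      have := hq (fun j => v j + s * (Pi.single k 1 : Fin n → ℝ) j)
      rw [hexp s, hl s] at this
      exact (mul_eq_zero.mp this).resolve_right hs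
    rcases eq_or_ne ((∑ j, b j * v j)) 0 with h0 | h0
    · have h1 := key 1 (by simpa [h0] using hk)
      have h2 := key (-1) (by simp [h0]; exact hk)
      have h3 := key 2 (by simp [h0]; exact hk)
      nlinarith [h1, h2, h3]
    · have := key 0 (by simpa using h0)
      simpa using this
  have hG0 : ∀ i j, G i j = 0 := aux_quad_zero n G hsym hQf
  apply hdet
  have : Matrix.of G = 0 := by ext i j; simpa using hG0 i j
  rw [this]
  haveI : Nonempty (Fin n) := ⟨k⟩
  exact Matrix.det_zero

theorem aux_fderiv_lag_x (n : ℕ) (m : (Fin n → ℝ) → Fin n → Fin n → ℝ)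
    (hm : ∀ a b, ContDiff ℝ (⊤ : ℕ∞) (fun x => m x a b))
    (V : ℝ → (Fin n → ℝ) → ℝ) (hV : ContDiff ℝ (⊤ : ℕ∞) (Function.uncurry V))
    (t : ℝ) (x v : Fin n → ℝ) (i : Fin n) :
    fderiv ℝ (fun y => (1/2 : ℝ) * (∑ a, ∑ b, m y a b * v a * v b) - V t y) x (Pi.single i 1)
      = (1/2) * (∑ a, ∑ b, fderiv ℝ (fun y => m y a b) x (Pi.single i 1) * v a * v b)
        - fderiv ℝ (V t) x (Pi.single i 1) := by
  have hm' : ∀ a b, HasFDerivAt (fun y => m y a b) (fderiv ℝ (fun y => m y a b) x) x :=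
    fun a b => (((hm a b).differentiable (by simp)) x).hasFDerivAt
  have hVx : DifferentiableAt ℝ (V t) x := by
    have h1 : DifferentiableAt ℝ (Function.uncurry V) (t, x) := (hV.differentiable (by simp)) (t, x)
    exact h1.comp x (DifferentiableAt.prodMk (differentiableAt_const t) differentiableAt_id)
  have hsum : HasFDerivAt (fun y => (1/2 : ℝ) * (∑ a, ∑ b, m y a b * v a * v b) - V t y)
      (((1/2 : ℝ) • (∑ a, ∑ b, (v b • (v a • fderiv ℝ (fun y => m y a b) x)))) - fderiv ℝ (V t) x) x := by
    refine HasFDerivAt.sub ?_ hVx.hasFDerivAt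
    refine HasFDerivAt.const_mul ?_ (1/2)
    refine HasFDerivAt.fun_sum fun a _ => ?_
    refine HasFDerivAt.fun_sum fun b _ => ?_
    exact ((hm' a b).mul_const (v a)).mul_const (v b)
  rw [hsum.fderiv]
  simp only [ContinuousLinearMap.coe_sub', Pi.sub_apply, ContinuousLinearMap.coe_smul',
    Pi.smul_apply, ContinuousLinearMap.coe_sum', Finset.sum_apply, smul_eq_mul]
  congr 1
  congr 1
  refine Finset.sum_congr rfl fun a _ => Finset.sum_congr rfl fun b _ => by ring

theorem aux_fderiv_lag_v (n : ℕ) (c : Fin n → Fin n → ℝ) (hsym : ∀ i j, c i j = c j i)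
    (cV : ℝ) (v : Fin n → ℝ) (i : Fin n) :
    fderiv ℝ (fun w => (1/2 : ℝ) * (∑ a, ∑ b, c a b * w a * w b) - cV) v (Pi.single i 1)
      = ∑ j, c i j * v j := by
  have hproj : ∀ a : Fin n, HasFDerivAt (fun w : Fin n → ℝ => w a)
      (ContinuousLinearMap.proj a : (Fin n → ℝ) →L[ℝ] ℝ) v :=
    fun a => (ContinuousLinearMap.proj (R := ℝ) (φ := fun _ : Fin n => ℝ) a).hasFDerivAt
  have hsum : HasFDerivAt (fun w : Fin n → ℝ => (1/2 : ℝ) * (∑ a, ∑ b, c a b * w a * w b) - cV)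
      ((1/2 : ℝ) • (∑ a, ∑ b, ((c a b * v a) • (ContinuousLinearMap.proj b : (Fin n → ℝ) →L[ℝ] ℝ)
          + v b • (c a b • (ContinuousLinearMap.proj a : (Fin n → ℝ) →L[ℝ] ℝ))))) v := by
    refine HasFDerivAt.sub_const cV ?_
    refine HasFDerivAt.const_mul ?_ (1/2)
    refine HasFDerivAt.fun_sum fun a _ => ?_
    refine HasFDerivAt.fun_sum fun b _ => ?_
    exact ((hproj a).const_mul (c a b)).mul (hproj b)
  rw [hsum.fderiv]
  simp only [ContinuousLinearMap.coe_smul', Pi.smul_apply, ContinuousLinearMap.coe_sum',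
    Finset.sum_apply, ContinuousLinearMap.add_apply, ContinuousLinearMap.smul_apply,
    ContinuousLinearMap.proj_apply, smul_eq_mul, Pi.single_apply]
  rw [Finset.mul_sum]
  have step : ∀ a : Fin n, ((1:ℝ)/2) * (∑ x : Fin n, ((c a x * v a * if x = i then 1 else 0)
      + v x * (c a x * if a = i then 1 else 0)))
      = (1/2) * (c a i * v a) + (1/2) * (if a = i then ∑ x : Fin n, v x * c a x else 0) := by
    intro a
    rw [Finset.sum_add_distrib, mul_add]
    congr 1
    · simp [mul_ite, Finset.sum_ite_eq']
    · congr 1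
      split
      · refine Finset.sum_congr rfl fun x _ => by ring
      · simp
  rw [Finset.sum_congr rfl (fun a _ => step a), Finset.sum_add_distrib]
  have e1 : (∑ a : Fin n, ((1:ℝ)/2) * (c a i * v a)) = (1/2) * ∑ j, c i j * v j := by
    rw [Finset.mul_sum]
    refine Finset.sum_congr rfl fun a _ => by rw [hsym a i]
  have e2 : (∑ a : Fin n, ((1:ℝ)/2) * (if a = i then ∑ x : Fin n, v x * c a x else 0))
      = (1/2) * ∑ j, c i j * v j := by
    simp only [mul_ite, mul_zero, Finset.sum_ite_eq', Finset.mem_univ, if_true]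
    rw [Finset.mul_sum, Finset.mul_sum]
    exact Finset.sum_congr rfl fun x _ => by ring
  rw [e1, e2]; ring

theorem aux_H1 {n : ℕ} (a : Fin n → ℝ) (B : Fin n → Fin n → ℝ) (v : Fin n → ℝ) :
    ∑ i, a i * (∑ j, B i j * v j) = ∑ k, (∑ i, B i k * a i) * v k := by
  simp only [Finset.mul_sum, Finset.sum_mul]
  rw [Finset.sum_comm]
  exact Finset.sum_congr rfl fun j _ => Finset.sum_congr rfl fun i _ => by ring

theorem aux_H2 {n : ℕ} (e : Fin n → ℝ) (D : Fin n → Fin n → Fin n → ℝ) (v : Fin n → ℝ) :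
    ∑ i, e i * ((1/2 : ℝ) * (∑ a, ∑ b, D a b i * v a * v b))
      = (1/2) * (∑ a, ∑ b, (∑ i, e i * D a b i) * v a * v b) := by
  simp only [Finset.mul_sum, Finset.sum_mul]
  rw [Finset.sum_comm]
  refine Finset.sum_congr rfl fun a _ => ?_
  rw [Finset.sum_comm]
  exact Finset.sum_congr rfl fun b _ => Finset.sum_congr rfl fun i _ => by ring

theorem aux_Hkey {n : ℕ} (S : Fin n → Fin n → ℝ) (de : Fin n → Fin n → ℝ) (v : Fin n → ℝ) :
    (∑ a, ∑ b, (∑ i, S i b * de i a) * v a * v b)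
      = ∑ i, (∑ k, v k * de i k) * (∑ j, S i j * v j) := by
  calc (∑ a, ∑ b, (∑ i, S i b * de i a) * v a * v b)
      = ∑ a, ∑ b, ∑ i, S i b * de i a * v a * v b := by
        simp only [Finset.sum_mul]
    _ = ∑ a, ∑ i, ∑ b, S i b * de i a * v a * v b :=
        Finset.sum_congr rfl fun a _ => Finset.sum_comm
    _ = ∑ i, ∑ a, ∑ b, S i b * de i a * v a * v b := Finset.sum_comm
    _ = ∑ i, (∑ k, v k * de i k) * (∑ j, S i j * v j) := by
        refine Finset.sum_congr rfl fun i _ => ?_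
        rw [Finset.sum_mul_sum]
        exact Finset.sum_congr rfl fun a _ => Finset.sum_congr rfl fun b _ => by ring

theorem aux_H3 {n : ℕ} (G : Fin n → Fin n → ℝ) (hsym : ∀ i j, G i j = G j i)
    (de : Fin n → Fin n → ℝ) (v : Fin n → ℝ) :
    ∑ i, (∑ k, v k * de i k) * (∑ j, G i j * v j)
      = (1/2 : ℝ) * (∑ a, ∑ b, ((∑ i, G i b * de i a) + (∑ i, G a i * de i b)) * v a * v b) := by
  have hB : (∑ a, ∑ b, (∑ i, G a i * de i b) * v a * v b)
      = (∑ a, ∑ b, (∑ i, G i b * de i a) * v a * v b) := by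
    rw [Finset.sum_comm]
    refine Finset.sum_congr rfl fun a _ => Finset.sum_congr rfl fun b _ => ?_
    have hs : (∑ i, G b i * de i a) = ∑ i, G i b * de i a :=
      Finset.sum_congr rfl fun i _ => by rw [hsym b i]
    rw [hs]; ring
  have hsplit : (∑ a, ∑ b, ((∑ i, G i b * de i a) + (∑ i, G a i * de i b)) * v a * v b)
      = (∑ a, ∑ b, (∑ i, G i b * de i a) * v a * v b)
        + (∑ a, ∑ b, (∑ i, G a i * de i b) * v a * v b) := by
    rw [← Finset.sum_add_distrib]
    refine Finset.sum_congr rfl fun a _ => ?_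
    rw [← Finset.sum_add_distrib]
    exact Finset.sum_congr rfl fun b _ => by ring
  rw [hsplit, hB, aux_Hkey]
  ring

theorem aux_H4 {n : ℕ} (G : Fin n → Fin n → ℝ) (c : ℝ) (v : Fin n → ℝ) :
    ∑ i, v i * c * (∑ j, G i j * v j) = c * (∑ i, ∑ j, G i j * v i * v j) := by
  rw [Finset.mul_sum]
  refine Finset.sum_congr rfl fun i _ => ?_
  rw [Finset.mul_sum, Finset.mul_sum]
  exact Finset.sum_congr rfl fun j _ => by ring

theorem aux_H5 {n : ℕ} (G : Fin n → Fin n → ℝ) (bx : Fin n → ℝ) (v : Fin n → ℝ) :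
    ∑ i, v i * (∑ k, v k * bx k) * (∑ j, G i j * v j)
      = (∑ i, ∑ j, G i j * v i * v j) * (∑ k, bx k * v k) := by
  rw [Finset.sum_mul]
  refine Finset.sum_congr rfl fun i _ => ?_
  rw [Finset.sum_mul_sum, Finset.mul_sum]
  refine Finset.sum_congr rfl fun j _ => ?_
  rw [Finset.mul_sum, Finset.sum_mul]
  exact Finset.sum_congr rfl fun k _ => by ring

theorem aux_masterL (n : ℕ) (G H : Fin n → Fin n → ℝ)
    (hG : ∀ i j, G i j = G j i) (hH : ∀ i j, H i j = H j i)
    (DG DH : Fin n → Fin n → Fin n → ℝ)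
    (e0 e1 te0 te1 : Fin n → ℝ) (de0 de1 : Fin n → Fin n → ℝ)
    (x0 x1 tx0 tx1 : ℝ) (bx : Fin n → ℝ)
    (W0 W1 tW0 tW1 : ℝ) (dW0 dW1 df : Fin n → ℝ) (tf : ℝ) (v : Fin n → ℝ) :
    (x1 * -tW0 + (∑ i, e1 i * ((1/2 : ℝ) * (∑ a, ∑ b, DG a b i * v a * v b) - dW0 i))
      + (∑ i, ((te1 i + ∑ k, v k * de1 i k) - v i * (tx1 + ∑ k, v k * bx k)) * (∑ j, G i j * v j)))
    + (x0 * -tW1 + (∑ i, e0 i * ((1/2 : ℝ) * (∑ a, ∑ b, DH a b i * v a * v b) - dW1 i))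
      + (∑ i, ((te0 i + ∑ k, v k * de0 i k) - v i * tx0) * (∑ j, H i j * v j)))
    + ((1/2 : ℝ) * (∑ i, ∑ j, G i j * v i * v j) - W0) * (tx1 + ∑ k, v k * bx k)
    + ((1/2 : ℝ) * (∑ i, ∑ j, H i j * v i * v j) - W1) * tx0
    - (tf + ∑ k, v k * df k)
    = x1 * -tW0 - (∑ i, e1 i * dW0 i) + x0 * -tW1 - (∑ i, e0 i * dW1 i)
      - tx0 * W1 - tx1 * W0 - tf
      + (∑ k, (∑ i, G i k * te1 i) * v k) + (∑ k, (∑ i, H i k * te0 i) * v k)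
      - (∑ k, df k * v k) - W0 * (∑ k, bx k * v k)
      + (1/2 : ℝ) * (∑ a, ∑ b, (∑ i, e1 i * DG a b i) * v a * v b)
      + (1/2 : ℝ) * (∑ a, ∑ b, (∑ i, e0 i * DH a b i) * v a * v b)
      + (1/2 : ℝ) * (∑ a, ∑ b, ((∑ i, G i b * de1 i a) + (∑ i, G a i * de1 i b)) * v a * v b)
      + (1/2 : ℝ) * (∑ a, ∑ b, ((∑ i, H i b * de0 i a) + (∑ i, H a i * de0 i b)) * v a * v b)
      - (1/2 : ℝ) * (tx1 * (∑ i, ∑ j, G i j * v i * v j))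
      - (1/2 : ℝ) * (tx0 * (∑ i, ∑ j, H i j * v i * v j))
      - (1/2 : ℝ) * ((∑ i, ∑ j, G i j * v i * v j) * (∑ k, bx k * v k)) := by
  have s1 : ∀ i, e1 i * ((1/2 : ℝ) * (∑ a, ∑ b, DG a b i * v a * v b) - dW0 i)
      = e1 i * ((1/2 : ℝ) * (∑ a, ∑ b, DG a b i * v a * v b)) - e1 i * dW0 i := fun i => by ring
  have s1' : ∀ i, e0 i * ((1/2 : ℝ) * (∑ a, ∑ b, DH a b i * v a * v b) - dW1 i)
      = e0 i * ((1/2 : ℝ) * (∑ a, ∑ b, DH a b i * v a * v b)) - e0 i * dW1 i := fun i => by ring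
  have s2 : ∀ i, ((te1 i + ∑ k, v k * de1 i k) - v i * (tx1 + ∑ k, v k * bx k)) * (∑ j, G i j * v j)
      = te1 i * (∑ j, G i j * v j) + (∑ k, v k * de1 i k) * (∑ j, G i j * v j)
        - v i * tx1 * (∑ j, G i j * v j)
        - v i * (∑ k, v k * bx k) * (∑ j, G i j * v j) := fun i => by ring
  have s2' : ∀ i, ((te0 i + ∑ k, v k * de0 i k) - v i * tx0) * (∑ j, H i j * v j)
      = te0 i * (∑ j, H i j * v j) + (∑ k, v k * de0 i k) * (∑ j, H i j * v j)
        - v i * tx0 * (∑ j, H i j * v j) := fun i => by ring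
  simp only [s1, s1', s2, s2', Finset.sum_add_distrib, Finset.sum_sub_distrib]
  rw [aux_H2 e1 DG v, aux_H2 e0 DH v, aux_H1 te1 G v, aux_H1 te0 H v,
      aux_H3 G hG de1 v, aux_H3 H hH de0 v, aux_H4 G tx1 v, aux_H4 H tx0 v, aux_H5 G bx v]
  have nb : (∑ k, v k * bx k) = ∑ k, bx k * v k :=
    Finset.sum_congr rfl fun k _ => mul_comm (v k) (bx k)
  have nd : (∑ k, v k * df k) = ∑ k, df k * v k :=
    Finset.sum_congr rfl fun k _ => mul_comm (v k) (df k)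
  rw [nb, nd]
  ring

theorem aux_masterR (n : ℕ) (G H : Fin n → Fin n → ℝ)
    (DG DH : Fin n → Fin n → Fin n → ℝ)
    (e0 e1 te0 te1 : Fin n → ℝ) (de0 de1 : Fin n → Fin n → ℝ)
    (x0 x1 tx0 tx1 : ℝ) (bx : Fin n → ℝ)
    (W0 W1 tW0 tW1 : ℝ) (dW0 dW1 df : Fin n → ℝ) (tf : ℝ) (v : Fin n → ℝ) :
    -(x0 * tW1 + (∑ k, e0 k * dW1 k) + x1 * tW0 + (∑ k, e1 k * dW0 k)
        + tx0 * W1 + tx1 * W0 + tf)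
    + (∑ k, ((∑ i, H i k * te0 i) + (∑ i, G i k * te1 i) - df k - W0 * bx k) * v k)
    + (1/2 : ℝ) * (∑ a, ∑ b,
        (((∑ i, e0 i * DH a b i) + (∑ i, H i b * de0 i a) + (∑ i, H a i * de0 i b))
          + ((∑ i, e1 i * DG a b i) + (∑ i, G i b * de1 i a) + (∑ i, G a i * de1 i b))
          - tx0 * H a b - tx1 * G a b) * v a * v b)
    - (1/2 : ℝ) * ((∑ i, ∑ j, G i j * v i * v j) * (∑ k, bx k * v k))
    = x1 * -tW0 - (∑ i, e1 i * dW0 i) + x0 * -tW1 - (∑ i, e0 i * dW1 i)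
      - tx0 * W1 - tx1 * W0 - tf
      + (∑ k, (∑ i, G i k * te1 i) * v k) + (∑ k, (∑ i, H i k * te0 i) * v k)
      - (∑ k, df k * v k) - W0 * (∑ k, bx k * v k)
      + (1/2 : ℝ) * (∑ a, ∑ b, (∑ i, e1 i * DG a b i) * v a * v b)
      + (1/2 : ℝ) * (∑ a, ∑ b, (∑ i, e0 i * DH a b i) * v a * v b)
      + (1/2 : ℝ) * (∑ a, ∑ b, ((∑ i, G i b * de1 i a) + (∑ i, G a i * de1 i b)) * v a * v b)
      + (1/2 : ℝ) * (∑ a, ∑ b, ((∑ i, H i b * de0 i a) + (∑ i, H a i * de0 i b)) * v a * v b)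
      - (1/2 : ℝ) * (tx1 * (∑ i, ∑ j, G i j * v i * v j))
      - (1/2 : ℝ) * (tx0 * (∑ i, ∑ j, H i j * v i * v j))
      - (1/2 : ℝ) * ((∑ i, ∑ j, G i j * v i * v j) * (∑ k, bx k * v k)) := by
  have sk : ∀ k, ((∑ i, H i k * te0 i) + (∑ i, G i k * te1 i) - df k - W0 * bx k) * v k
      = (∑ i, H i k * te0 i) * v k + (∑ i, G i k * te1 i) * v k - df k * v k
        - W0 * (bx k * v k) := fun k => by ring
  have sab : ∀ a b : Fin n,
      (((∑ i, e0 i * DH a b i) + (∑ i, H i b * de0 i a) + (∑ i, H a i * de0 i b))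
          + ((∑ i, e1 i * DG a b i) + (∑ i, G i b * de1 i a) + (∑ i, G a i * de1 i b))
          - tx0 * H a b - tx1 * G a b) * v a * v b
      = (∑ i, e0 i * DH a b i) * v a * v b
        + ((∑ i, H i b * de0 i a) + (∑ i, H a i * de0 i b)) * v a * v b
        + (∑ i, e1 i * DG a b i) * v a * v b
        + ((∑ i, G i b * de1 i a) + (∑ i, G a i * de1 i b)) * v a * v b
        - tx0 * (H a b * v a * v b) - tx1 * (G a b * v a * v b) := fun a b => by ring
  simp only [sk, sab, Finset.sum_add_distrib, Finset.sum_sub_distrib, ← Finset.mul_sum]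
  ring

theorem aux_lieD_sym {n : ℕ} (η : ℝ → (Fin n → ℝ) → Fin n → ℝ)
    (m : (Fin n → ℝ) → Fin n → Fin n → ℝ)
    (msym : ∀ x i j, m x i j = m x j i) (t : ℝ) (x : Fin n → ℝ) (a b : Fin n) :
    lieD η m t x a b = lieD η m t x b a := by
  unfold lieD
  have h1 : (fun y => m y a b) = fun y => m y b a := funext fun y => msym y a b
  have h2 : ∀ (i j : Fin n), (∑ k, m x k j * pdx (fun s y => η s y k) i t x)
      = ∑ k, m x j k * pdx (fun s y => η s y k) i t x :=
    fun i j => Finset.sum_congr rfl fun k _ => by rw [msym x k j]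
  rw [h1, h2 a b, h2 b a]
  ring

theorem aux_prolong_eq (n : ℕ) (m : (Fin n → ℝ) → Fin n → Fin n → ℝ)
    (hm : ∀ a b, ContDiff ℝ (⊤ : ℕ∞) (fun x => m x a b))
    (msym : ∀ x i j, m x i j = m x j i)
    (V : ℝ → (Fin n → ℝ) → ℝ) (hV : ContDiff ℝ (⊤ : ℕ∞) (Function.uncurry V))
    (ξ : ℝ → (Fin n → ℝ) → ℝ) (η : ℝ → (Fin n → ℝ) → Fin n → ℝ)
    (t : ℝ) (x v : Fin n → ℝ) :
    prolongAct ξ η (lag m V) t x v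
      = ξ t x * -(pdt V t x)
        + (∑ i, η t x i * ((1/2 : ℝ) * (∑ a, ∑ b, fderiv ℝ (fun y => m y a b) x (Pi.single i 1) * v a * v b)
            - pdx V i t x))
        + (∑ i, ((pdt (fun s y => η s y i) t x + ∑ k, v k * pdx (fun s y => η s y i) k t x)
            - v i * (pdt ξ t x + ∑ k, v k * pdx ξ k t x)) * (∑ j, m x i j * v j)) := by
  unfold prolongAct Dtot
  congr 1
  congr 1
  · congr 1
    show deriv (fun s => (1/2 : ℝ) * (∑ i, ∑ j, m x i j * v i * v j) - V s x) t = -(pdt V t x)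
    rw [deriv_const_sub]
    rfl
  · refine Finset.sum_congr rfl fun i _ => ?_
    congr 1
    show fderiv ℝ (fun y => (1/2 : ℝ) * (∑ a, ∑ b, m y a b * v a * v b) - V t y) x (Pi.single i 1) = _
    rw [aux_fderiv_lag_x n m hm V hV t x v i]
    rfl
  · refine Finset.sum_congr rfl fun i _ => ?_
    congr 1
    show fderiv ℝ (fun w => (1/2 : ℝ) * (∑ a, ∑ b, m x a b * w a * w b) - V t x) v (Pi.single i 1)
        = ∑ j, m x i j * v j
    exact aux_fderiv_lag_v n (m x) (fun i j => msym x i j) (V t x) v i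

theorem aux_masterS (n : ℕ) (c1 : Fin n → ℝ) (M G : Fin n → Fin n → ℝ)
    (bx : Fin n → ℝ) (C0 s : ℝ) (v : Fin n → ℝ) :
    C0 + (∑ k, c1 k * (s * v k))
      + (1/2 : ℝ) * (∑ a, ∑ b, M a b * (s * v a) * (s * v b))
      - (1/2 : ℝ) * ((∑ i, ∑ j, G i j * (s * v i) * (s * v j)) * (∑ k, bx k * (s * v k)))
    = C0 + s * (∑ k, c1 k * v k)
      + s^2 * ((1/2 : ℝ) * (∑ a, ∑ b, M a b * v a * v b))
      - s^3 * ((1/2 : ℝ) * ((∑ i, ∑ j, G i j * v i * v j) * (∑ k, bx k * v k))) := by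
  have e1 : ∀ (c : Fin n → ℝ), (∑ k, c k * (s * v k)) = s * ∑ k, c k * v k := by
    intro c; rw [Finset.mul_sum]; exact Finset.sum_congr rfl fun k _ => by ring
  have e2 : ∀ (M : Fin n → Fin n → ℝ),
      (∑ a, ∑ b, M a b * (s * v a) * (s * v b)) = s^2 * ∑ a, ∑ b, M a b * v a * v b := by
    intro M
    rw [Finset.mul_sum]
    refine Finset.sum_congr rfl fun a _ => ?_
    rw [Finset.mul_sum]
    exact Finset.sum_congr rfl fun b _ => by ring
  rw [e1, e2, e2, e1]
  ring

theorem aux_key (n : ℕ)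
    (g h : (Fin n → ℝ) → Fin n → Fin n → ℝ)
    (hg : ∀ i j : Fin n, ContDiff ℝ (⊤ : ℕ∞) (fun x => g x i j))
    (hh : ∀ i j : Fin n, ContDiff ℝ (⊤ : ℕ∞) (fun x => h x i j))
    (hgsym : ∀ (x : Fin n → ℝ) (i j : Fin n), g x i j = g x j i)
    (hhsym : ∀ (x : Fin n → ℝ) (i j : Fin n), h x i j = h x j i)
    (V₀ V₁ ξ₀ ξ₁ f₁ : ℝ → (Fin n → ℝ) → ℝ)
    (η₀ η₁ : ℝ → (Fin n → ℝ) → Fin n → ℝ)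
    (hV₀ : ContDiff ℝ (⊤ : ℕ∞) (Function.uncurry V₀))
    (hV₁ : ContDiff ℝ (⊤ : ℕ∞) (Function.uncurry V₁))
    (hξ₀x : ∀ (t : ℝ) (x : Fin n → ℝ) (k : Fin n), pdx ξ₀ k t x = 0)
    (t : ℝ) (x v : Fin n → ℝ) :
    prolongAct ξ₁ η₁ (lag g V₀) t x v + prolongAct ξ₀ η₀ (lag h V₁) t x v
        + lag g V₀ t x v * Dtot ξ₁ t x v + lag h V₁ t x v * Dtot ξ₀ t x v
        - Dtot f₁ t x v
    = -(ξ₀ t x * pdt V₁ t x + (∑ k, η₀ t x k * pdx V₁ k t x) + ξ₁ t x * pdt V₀ t x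
          + (∑ k, η₁ t x k * pdx V₀ k t x) + pdt ξ₀ t x * V₁ t x + pdt ξ₁ t x * V₀ t x
          + pdt f₁ t x)
      + (∑ k, ((∑ i, h x i k * pdt (fun s y => η₀ s y i) t x)
          + (∑ i, g x i k * pdt (fun s y => η₁ s y i) t x)
          - pdx f₁ k t x - V₀ t x * pdx ξ₁ k t x) * v k)
      + (1/2 : ℝ) * (∑ a, ∑ b, (lieD η₀ h t x a b + lieD η₁ g t x a b
          - pdt ξ₀ t x * h x a b - pdt ξ₁ t x * g x a b) * v a * v b)
      - (1/2 : ℝ) * ((∑ i, ∑ j, g x i j * v i * v j) * (∑ k, pdx ξ₁ k t x * v k)) := by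
  rw [aux_prolong_eq n g hg hgsym V₀ hV₀ ξ₁ η₁ t x v,
      aux_prolong_eq n h hh hhsym V₁ hV₁ ξ₀ η₀ t x v]
  simp only [lag, Dtot, lieD]
  simp only [hξ₀x, mul_zero, Finset.sum_const_zero, add_zero]
  rw [aux_masterL n (g x) (h x) (fun i j => hgsym x i j) (fun i j => hhsym x i j)
      (fun a b i => fderiv ℝ (fun y => g y a b) x (Pi.single i 1))
      (fun a b i => fderiv ℝ (fun y => h y a b) x (Pi.single i 1))
      (fun i => η₀ t x i) (fun i => η₁ t x i)
      (fun i => pdt (fun s y => η₀ s y i) t x) (fun i => pdt (fun s y => η₁ s y i) t x)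
      (fun i k => pdx (fun s y => η₀ s y i) k t x) (fun i k => pdx (fun s y => η₁ s y i) k t x)
      (ξ₀ t x) (ξ₁ t x) (pdt ξ₀ t x) (pdt ξ₁ t x) (fun k => pdx ξ₁ k t x)
      (V₀ t x) (V₁ t x) (pdt V₀ t x) (pdt V₁ t x)
      (fun k => pdx V₀ k t x) (fun k => pdx V₁ k t x) (fun k => pdx f₁ k t x)
      (pdt f₁ t x) v,
    aux_masterR n (g x) (h x)
      (fun a b i => fderiv ℝ (fun y => g y a b) x (Pi.single i 1))
      (fun a b i => fderiv ℝ (fun y => h y a b) x (Pi.single i 1))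
      (fun i => η₀ t x i) (fun i => η₁ t x i)
      (fun i => pdt (fun s y => η₀ s y i) t x) (fun i => pdt (fun s y => η₁ s y i) t x)
      (fun i k => pdx (fun s y => η₀ s y i) k t x) (fun i k => pdx (fun s y => η₁ s y i) k t x)
      (ξ₀ t x) (ξ₁ t x) (pdt ξ₀ t x) (pdt ξ₁ t x) (fun k => pdx ξ₁ k t x)
      (V₀ t x) (V₁ t x) (pdt V₀ t x) (pdt V₁ t x)
      (fun k => pdx V₀ k t x) (fun k => pdx V₁ k t x) (fun k => pdx f₁ k t x)
      (pdt f₁ t x) v]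


/-- First-order (ε¹) approximate Noether determining equations: for
`L₀ = ½ Σ g_{ij}(x) vⁱvʲ − V₀(t,x)` and `L₁ = ½ Σ h_{ij}(x) vⁱvʲ − V₁(t,x)`
with `g` everywhere invertible and `ξ₀` independent of `x`, the order-ε
Noether condition
`X₁^{[1]}L₀ + X₀^{[1]}L₁ + L₀ D_tξ₁ + L₁ D_tξ₀ − D_t f₁ = 0`
holds for all `(t,x,v)` if and only if
(i) `∂_{xᵏ}ξ₁ = 0`; (ii) `(L_{η₀}h)_{ij} + (L_{η₁}g)_{ij} = (∂ₜξ₀) h_{ij} + (∂ₜξ₁) g_{ij}`;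
(iii) `Σᵢ h_{ij} ∂ₜη₀ⁱ + Σᵢ g_{ij} ∂ₜη₁ⁱ = ∂_{xʲ}f₁`; and
(iv) `ξ₀ ∂ₜV₁ + Σₖ η₀ᵏ ∂_{xᵏ}V₁ + ξ₁ ∂ₜV₀ + Σₖ η₁ᵏ ∂_{xᵏ}V₀ + (∂ₜξ₀) V₁ + (∂ₜξ₁) V₀ + ∂ₜf₁ = 0`
identically. -/
theorem first_order_noether_determining_equations
    (n : ℕ)
    (g h : (Fin n → ℝ) → Fin n → Fin n → ℝ)
    (hg : ∀ i j : Fin n, ContDiff ℝ (⊤ : ℕ∞) (fun x => g x i j))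
    (hh : ∀ i j : Fin n, ContDiff ℝ (⊤ : ℕ∞) (fun x => h x i j))
    (hgsym : ∀ (x : Fin n → ℝ) (i j : Fin n), g x i j = g x j i)
    (hhsym : ∀ (x : Fin n → ℝ) (i j : Fin n), h x i j = h x j i)
    (hginv : ∀ x : Fin n → ℝ, (Matrix.of (g x)).det ≠ 0)
    (V₀ V₁ ξ₀ ξ₁ f₁ : ℝ → (Fin n → ℝ) → ℝ)
    (η₀ η₁ : ℝ → (Fin n → ℝ) → Fin n → ℝ)
    (hV₀ : ContDiff ℝ (⊤ : ℕ∞) (Function.uncurry V₀))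
    (hV₁ : ContDiff ℝ (⊤ : ℕ∞) (Function.uncurry V₁))
    (hξ₀ : ContDiff ℝ (⊤ : ℕ∞) (Function.uncurry ξ₀))
    (hξ₁ : ContDiff ℝ (⊤ : ℕ∞) (Function.uncurry ξ₁))
    (hf₁ : ContDiff ℝ (⊤ : ℕ∞) (Function.uncurry f₁))
    (hη₀ : ∀ i : Fin n, ContDiff ℝ (⊤ : ℕ∞) (fun p : ℝ × (Fin n → ℝ) => η₀ p.1 p.2 i))
    (hη₁ : ∀ i : Fin n, ContDiff ℝ (⊤ : ℕ∞) (fun p : ℝ × (Fin n → ℝ) => η₁ p.1 p.2 i))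
    (hξ₀x : ∀ (t : ℝ) (x : Fin n → ℝ) (k : Fin n), pdx ξ₀ k t x = 0) :
    (∀ (t : ℝ) (x v : Fin n → ℝ),
      prolongAct ξ₁ η₁ (lag g V₀) t x v + prolongAct ξ₀ η₀ (lag h V₁) t x v
        + lag g V₀ t x v * Dtot ξ₁ t x v + lag h V₁ t x v * Dtot ξ₀ t x v
        - Dtot f₁ t x v = 0)
    ↔
    ((∀ (t : ℝ) (x : Fin n → ℝ) (k : Fin n), pdx ξ₁ k t x = 0)
      ∧ (∀ (t : ℝ) (x : Fin n → ℝ) (i j : Fin n),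
          lieD η₀ h t x i j + lieD η₁ g t x i j
            = pdt ξ₀ t x * h x i j + pdt ξ₁ t x * g x i j)
      ∧ (∀ (t : ℝ) (x : Fin n → ℝ) (j : Fin n),
          (∑ i, h x i j * pdt (fun s y => η₀ s y i) t x)
            + (∑ i, g x i j * pdt (fun s y => η₁ s y i) t x)
          = pdx f₁ j t x)
      ∧ (∀ (t : ℝ) (x : Fin n → ℝ),
          ξ₀ t x * pdt V₁ t x + (∑ k, η₀ t x k * pdx V₁ k t x)
            + ξ₁ t x * pdt V₀ t x + (∑ k, η₁ t x k * pdx V₀ k t x)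
            + pdt ξ₀ t x * V₁ t x + pdt ξ₁ t x * V₀ t x + pdt f₁ t x = 0)) := by
  have key := aux_key n g h hg hh hgsym hhsym V₀ V₁ ξ₀ ξ₁ f₁ η₀ η₁ hV₀ hV₁ hξ₀x
  constructor
  · intro hE
    have base : ∀ (t : ℝ) (x : Fin n → ℝ),
        (∀ k, pdx ξ₁ k t x = 0)
        ∧ (∀ i j, lieD η₀ h t x i j + lieD η₁ g t x i j
            = pdt ξ₀ t x * h x i j + pdt ξ₁ t x * g x i j)
        ∧ (∀ j, (∑ i, h x i j * pdt (fun s y => η₀ s y i) t x)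
            + (∑ i, g x i j * pdt (fun s y => η₁ s y i) t x) = pdx f₁ j t x)
        ∧ (ξ₀ t x * pdt V₁ t x + (∑ k, η₀ t x k * pdx V₁ k t x)
            + ξ₁ t x * pdt V₀ t x + (∑ k, η₁ t x k * pdx V₀ k t x)
            + pdt ξ₀ t x * V₁ t x + pdt ξ₁ t x * V₀ t x + pdt f₁ t x = 0) := by
      intro t x
      have hR : ∀ v : Fin n → ℝ,
          -(ξ₀ t x * pdt V₁ t x + (∑ k, η₀ t x k * pdx V₁ k t x) + ξ₁ t x * pdt V₀ t x
              + (∑ k, η₁ t x k * pdx V₀ k t x) + pdt ξ₀ t x * V₁ t x + pdt ξ₁ t x * V₀ t x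
              + pdt f₁ t x)
          + (∑ k, ((∑ i, h x i k * pdt (fun s y => η₀ s y i) t x)
              + (∑ i, g x i k * pdt (fun s y => η₁ s y i) t x)
              - pdx f₁ k t x - V₀ t x * pdx ξ₁ k t x) * v k)
          + (1/2 : ℝ) * (∑ a, ∑ b, (lieD η₀ h t x a b + lieD η₁ g t x a b
              - pdt ξ₀ t x * h x a b - pdt ξ₁ t x * g x a b) * v a * v b)
          - (1/2 : ℝ) * ((∑ i, ∑ j, g x i j * v i * v j) * (∑ k, pdx ξ₁ k t x * v k)) = 0 :=
        fun v => (key t x v).symm.trans (hE t x v)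
      have hC0 : ξ₀ t x * pdt V₁ t x + (∑ k, η₀ t x k * pdx V₁ k t x)
          + ξ₁ t x * pdt V₀ t x + (∑ k, η₁ t x k * pdx V₀ k t x)
          + pdt ξ₀ t x * V₁ t x + pdt ξ₁ t x * V₀ t x + pdt f₁ t x = 0 := by
        have h0 := hR 0
        simp only [Pi.zero_apply, mul_zero, zero_mul, Finset.sum_const_zero,
          add_zero, sub_zero] at h0
        linarith [h0]
      have hpoly : ∀ (s : ℝ) (v : Fin n → ℝ),
          -(ξ₀ t x * pdt V₁ t x + (∑ k, η₀ t x k * pdx V₁ k t x) + ξ₁ t x * pdt V₀ t x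
              + (∑ k, η₁ t x k * pdx V₀ k t x) + pdt ξ₀ t x * V₁ t x + pdt ξ₁ t x * V₀ t x
              + pdt f₁ t x)
          + s * (∑ k, ((∑ i, h x i k * pdt (fun s y => η₀ s y i) t x)
              + (∑ i, g x i k * pdt (fun s y => η₁ s y i) t x)
              - pdx f₁ k t x - V₀ t x * pdx ξ₁ k t x) * v k)
          + s^2 * ((1/2 : ℝ) * (∑ a, ∑ b, (lieD η₀ h t x a b + lieD η₁ g t x a b
              - pdt ξ₀ t x * h x a b - pdt ξ₁ t x * g x a b) * v a * v b))
          - s^3 * ((1/2 : ℝ) * ((∑ i, ∑ j, g x i j * v i * v j)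
              * (∑ k, pdx ξ₁ k t x * v k))) = 0 := by
        intro s v
        have hh := hR (fun k => s * v k)
        rw [aux_masterS n
          (fun k => (∑ i, h x i k * pdt (fun s y => η₀ s y i) t x)
              + (∑ i, g x i k * pdt (fun s y => η₁ s y i) t x)
              - pdx f₁ k t x - V₀ t x * pdx ξ₁ k t x)
          (fun a b => lieD η₀ h t x a b + lieD η₁ g t x a b
              - pdt ξ₀ t x * h x a b - pdt ξ₁ t x * g x a b)
          (g x) (fun k => pdx ξ₁ k t x)
          (-(ξ₀ t x * pdt V₁ t x + (∑ k, η₀ t x k * pdx V₁ k t x) + ξ₁ t x * pdt V₀ t x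
              + (∑ k, η₁ t x k * pdx V₀ k t x) + pdt ξ₀ t x * V₁ t x + pdt ξ₁ t x * V₀ t x
              + pdt f₁ t x)) s v] at hh
        exact hh
      have hA : ∀ v : Fin n → ℝ,
          (∑ k, ((∑ i, h x i k * pdt (fun s y => η₀ s y i) t x)
              + (∑ i, g x i k * pdt (fun s y => η₁ s y i) t x)
              - pdx f₁ k t x - V₀ t x * pdx ξ₁ k t x) * v k) = 0 := by
        intro v
        have e1 := hpoly 1 v
        have e2 := hpoly (-1) v
        have e3 := hpoly 2 v
        norm_num at e1 e2 e3
        linarith [hC0, e1, e2, e3]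
      have hQ : ∀ v : Fin n → ℝ,
          (∑ a, ∑ b, (lieD η₀ h t x a b + lieD η₁ g t x a b
              - pdt ξ₀ t x * h x a b - pdt ξ₁ t x * g x a b) * v a * v b) = 0 := by
        intro v
        have e1 := hpoly 1 v
        have e2 := hpoly (-1) v
        have e3 := hpoly 2 v
        norm_num at e1 e2 e3
        linarith [hC0, e1, e2, e3]
      have hCb : ∀ v : Fin n → ℝ,
          (∑ i, ∑ j, g x i j * v i * v j) * (∑ k, pdx ξ₁ k t x * v k) = 0 := by
        intro v
        have e1 := hpoly 1 v
        have e2 := hpoly (-1) v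
        have e3 := hpoly 2 v
        norm_num at e1 e2 e3
        linarith [hC0, e1, e2, e3]
      have hb : ∀ k, pdx ξ₁ k t x = 0 :=
        aux_cube_zero n (g x) (fun i j => hgsym x i j) (hginv x)
          (fun k => pdx ξ₁ k t x) hCb
      have hMsym : ∀ a b : Fin n,
          lieD η₀ h t x a b + lieD η₁ g t x a b
              - pdt ξ₀ t x * h x a b - pdt ξ₁ t x * g x a b
          = lieD η₀ h t x b a + lieD η₁ g t x b a
              - pdt ξ₀ t x * h x b a - pdt ξ₁ t x * g x b a := by
        intro a b
        rw [aux_lieD_sym η₀ h hhsym t x a b, aux_lieD_sym η₁ g hgsym t x a b,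
          hhsym x a b, hgsym x a b]
      have hM0 := aux_quad_zero n
        (fun a b => lieD η₀ h t x a b + lieD η₁ g t x a b
            - pdt ξ₀ t x * h x a b - pdt ξ₁ t x * g x a b) hMsym hQ
      refine ⟨hb, ?_, ?_, hC0⟩
      · intro i j
        have := hM0 i j
        linarith [this]
      · intro j
        have h1 := hA (Pi.single j 1)
        simp only [Pi.single_apply, mul_ite, mul_one, mul_zero,
          Finset.sum_ite_eq', Finset.mem_univ, if_true] at h1
        have h2 := hb j
        rw [h2, mul_zero, sub_zero] at h1
        linarith [h1]
    exact ⟨fun t x k => (base t x).1 k, fun t x i j => (base t x).2.1 i j,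
      fun t x j => (base t x).2.2.1 j, fun t x => (base t x).2.2.2⟩
  · rintro ⟨h1, h2, h3, h4⟩ t x v
    rw [key t x v]
    have hb : ∀ k, pdx ξ₁ k t x = 0 := h1 t x
    simp only [hb, mul_zero, sub_zero, zero_mul, Finset.sum_const_zero]
    have hc1 : ∀ k : Fin n, (∑ i, h x i k * pdt (fun s y => η₀ s y i) t x)
        + (∑ i, g x i k * pdt (fun s y => η₁ s y i) t x) - pdx f₁ k t x = 0 := by
      intro k
      have := h3 t x k
      linarith
    have hM : ∀ a b : Fin n, lieD η₀ h t x a b + lieD η₁ g t x a b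
        - pdt ξ₀ t x * h x a b - pdt ξ₁ t x * g x a b = 0 := by
      intro a b
      have := h2 t x a b
      linarith
    simp only [hc1, hM, zero_mul, Finset.sum_const_zero, mul_zero, add_zero, sub_zero]
    have := h4 t x
    linarith
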